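/- arXiv:2002.12614 — 2 statements merged into one kernel-verified Lean document; each statement's English description precedes it below -/
import Mathlib

section
/- Let G = (G^{ab}_{xy}) be a bipartite Bell functional with N inputs and K outputs per party and nonnegative coefficients, and let Ĝ be the tripartite functional with N² inputs and K² outputs per player defined by Ĝ^{a₁a₂,b₁b₂,c₁c₂}_{x₁x₂,y₁y₂,z₁z₂} = G^{a₁b₁}_{x₁y₁} G^{a₂c₁}_{x₂z₁} G^{b₂c₂}_{y₂z₂}. Then the tripartite quantum value satisfies ω_{Q³}(Ĝ) ≥ ω_{Q²}(G)³. Moreover, if a bipartite quantum strategy achieving value v for G uses a state of local dimension d, then a tripartite quantum strategy achieving value v³ for Ĝ exists using a state of local dimension d². -/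
open scoped BigOperators
open Kronecker
open scoped ComplexOrder

noncomputable section

namespace BellGames

/-- A POVM on `ℂ^d` with outcomes in `A`: positive semidefinite matrices summing to the
identity. -/
def IsPOVM {A : Type*} [Fintype A] {d : ℕ} (E : A → Matrix (Fin d) (Fin d) ℂ) : Prop :=
  (∀ a, (E a).PosSemidef) ∧ (∑ a, E a) = 1

/-- A bipartite quantum behaviour realized with local Hilbert spaces `ℂ^{d₁}` and `ℂ^{d₂}`:
`P(a,b|x,y) = ⟨ψ| Π_x^a ⊗ Λ_y^b |ψ⟩` for a unit vector `ψ` and POVMs `Π`, `Λ`. -/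
def IsQBeh2Dim {X Y A B : Type*} [Fintype A] [Fintype B] (d₁ d₂ : ℕ)
    (P : X → Y → A → B → ℝ) : Prop :=
  ∃ (ψ : Fin d₁ × Fin d₂ → ℂ)
    (E : X → A → Matrix (Fin d₁) (Fin d₁) ℂ)
    (F : Y → B → Matrix (Fin d₂) (Fin d₂) ℂ),
    (∑ i, Complex.normSq (ψ i)) = 1 ∧
    (∀ x, IsPOVM (E x)) ∧ (∀ y, IsPOVM (F y)) ∧
    ∀ x y a b, ((P x y a b : ℝ) : ℂ) =
      ∑ i, ∑ j, (starRingEnd ℂ) (ψ i) * ((E x a ⊗ₖ F y b) i j) * ψ j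

/-- A bipartite quantum behaviour (arbitrary finite local dimensions). -/
def IsQBeh2 {X Y A B : Type*} [Fintype A] [Fintype B] (P : X → Y → A → B → ℝ) : Prop :=
  ∃ d₁ d₂, IsQBeh2Dim d₁ d₂ P

/-- A tripartite quantum behaviour realized with local Hilbert spaces `ℂ^{d₁}`, `ℂ^{d₂}`,
`ℂ^{d₃}`: `P(a,b,c|x,y,z) = ⟨ψ| Π_x^a ⊗ Λ_y^b ⊗ Υ_z^c |ψ⟩` for a unit vector `ψ` and
POVMs `Π`, `Λ`, `Υ`. -/
def IsQBeh3Dim {X Y Z A B C : Type*} [Fintype A] [Fintype B] [Fintype C] (d₁ d₂ d₃ : ℕ)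
    (P : X → Y → Z → A → B → C → ℝ) : Prop :=
  ∃ (ψ : Fin d₁ × Fin d₂ × Fin d₃ → ℂ)
    (E : X → A → Matrix (Fin d₁) (Fin d₁) ℂ)
    (F : Y → B → Matrix (Fin d₂) (Fin d₂) ℂ)
    (G : Z → C → Matrix (Fin d₃) (Fin d₃) ℂ),
    (∑ i, Complex.normSq (ψ i)) = 1 ∧
    (∀ x, IsPOVM (E x)) ∧ (∀ y, IsPOVM (F y)) ∧ (∀ z, IsPOVM (G z)) ∧
    ∀ x y z a b c, ((P x y z a b c : ℝ) : ℂ) =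
      ∑ i, ∑ j, (starRingEnd ℂ) (ψ i) * ((E x a ⊗ₖ (F y b ⊗ₖ G z c)) i j) * ψ j

/-- A tripartite quantum behaviour (arbitrary finite local dimensions). -/
def IsQBeh3 {X Y Z A B C : Type*} [Fintype A] [Fintype B] [Fintype C]
    (P : X → Y → Z → A → B → C → ℝ) : Prop :=
  ∃ d₁ d₂ d₃, IsQBeh3Dim d₁ d₂ d₃ P

/-- A bipartite behaviour: nonnegative and normalized. -/
def IsBeh2 {X Y A B : Type*} [Fintype A] [Fintype B] (P : X → Y → A → B → ℝ) : Prop :=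
  (∀ x y a b, 0 ≤ P x y a b) ∧ ∀ x y, (∑ a, ∑ b, P x y a b) = 1

/-- A single-party behaviour: nonnegative and normalized. -/
def IsBeh1 {X A : Type*} [Fintype A] (P : X → A → ℝ) : Prop :=
  (∀ x a, 0 ≤ P x a) ∧ ∀ x, (∑ a, P x a) = 1

/-- A bipartite fully local behaviour: a convex combination of products of single-party
behaviours. -/
def IsLocal2 {X Y A B : Type*} [Fintype A] [Fintype B] (P : X → Y → A → B → ℝ) : Prop :=
  ∃ (m : ℕ) (p : Fin m → ℝ) (Q : Fin m → X → A → ℝ) (R : Fin m → Y → B → ℝ),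
    (∀ j, 0 ≤ p j) ∧ (∑ j, p j) = 1 ∧ (∀ j, IsBeh1 (Q j)) ∧ (∀ j, IsBeh1 (R j)) ∧
    ∀ x y a b, P x y a b = ∑ j, p j * Q j x a * R j y b

/-- A non-signalling bipartite behaviour: each marginal is independent of the other
party's input. -/
def IsNS2 {X Y A B : Type*} [Fintype A] [Fintype B] (Q : X → Y → A → B → ℝ) : Prop :=
  (∀ x x' y b, (∑ a, Q x y a b) = ∑ a, Q x' y a b) ∧
  (∀ x y y' a, (∑ b, Q x y a b) = ∑ b, Q x y' a b)

/-- A bilocal product term: the product of an arbitrary behaviour on two of the three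
parties with an arbitrary behaviour on the remaining party (any of the three
bipartitions). -/
def BilocTerm3 {X Y Z A B C : Type*} [Fintype A] [Fintype B] [Fintype C]
    (P : X → Y → Z → A → B → C → ℝ) : Prop :=
  (∃ Q R, IsBeh2 Q ∧ IsBeh1 R ∧ ∀ x y z a b c, P x y z a b c = Q x y a b * R z c) ∨
  (∃ Q R, IsBeh2 Q ∧ IsBeh1 R ∧ ∀ x y z a b c, P x y z a b c = Q y z b c * R x a) ∨
  (∃ Q R, IsBeh2 Q ∧ IsBeh1 R ∧ ∀ x y z a b c, P x y z a b c = Q x z a c * R y b)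

/-- A non-signalling bilocal product term: as `BilocTerm3`, but with the two-party factor
required to be non-signalling. -/
def NSBilocTerm3 {X Y Z A B C : Type*} [Fintype A] [Fintype B] [Fintype C]
    (P : X → Y → Z → A → B → C → ℝ) : Prop :=
  (∃ Q R, IsBeh2 Q ∧ IsNS2 Q ∧ IsBeh1 R ∧
      ∀ x y z a b c, P x y z a b c = Q x y a b * R z c) ∨
  (∃ Q R, IsBeh2 Q ∧ IsNS2 Q ∧ IsBeh1 R ∧
      ∀ x y z a b c, P x y z a b c = Q y z b c * R x a) ∨
  (∃ Q R, IsBeh2 Q ∧ IsNS2 Q ∧ IsBeh1 R ∧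
      ∀ x y z a b c, P x y z a b c = Q x z a c * R y b)

/-- A tripartite general bilocal behaviour: a convex combination of bilocal product terms
(no non-signalling restriction). -/
def IsGenBiloc3 {X Y Z A B C : Type*} [Fintype A] [Fintype B] [Fintype C]
    (P : X → Y → Z → A → B → C → ℝ) : Prop :=
  ∃ (m : ℕ) (p : Fin m → ℝ) (Ps : Fin m → X → Y → Z → A → B → C → ℝ),
    (∀ j, 0 ≤ p j) ∧ (∑ j, p j) = 1 ∧ (∀ j, BilocTerm3 (Ps j)) ∧
    ∀ x y z a b c, P x y z a b c = ∑ j, p j * Ps j x y z a b c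

/-- A tripartite non-signalling bilocal behaviour: a convex combination of non-signalling
bilocal product terms. -/
def IsNSBiloc3 {X Y Z A B C : Type*} [Fintype A] [Fintype B] [Fintype C]
    (P : X → Y → Z → A → B → C → ℝ) : Prop :=
  ∃ (m : ℕ) (p : Fin m → ℝ) (Ps : Fin m → X → Y → Z → A → B → C → ℝ),
    (∀ j, 0 ≤ p j) ∧ (∑ j, p j) = 1 ∧ (∀ j, NSBilocTerm3 (Ps j)) ∧
    ∀ x y z a b c, P x y z a b c = ∑ j, p j * Ps j x y z a b c

/-- The value `⟨G, P⟩` of a bipartite Bell functional on a bipartite behaviour. -/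
def val2 {X Y A B : Type*} [Fintype X] [Fintype Y] [Fintype A] [Fintype B]
    (G P : X → Y → A → B → ℝ) : ℝ :=
  ∑ x, ∑ y, ∑ a, ∑ b, G x y a b * P x y a b

/-- The value `⟨G, P⟩` of a tripartite Bell functional on a tripartite behaviour. -/
def val3 {X Y Z A B C : Type*} [Fintype X] [Fintype Y] [Fintype Z]
    [Fintype A] [Fintype B] [Fintype C]
    (G P : X → Y → Z → A → B → C → ℝ) : ℝ :=
  ∑ x, ∑ y, ∑ z, ∑ a, ∑ b, ∑ c, G x y z a b c * P x y z a b c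

/-- `ω_{Q²}(G)`: the bipartite quantum value of `G`. -/
def qVal2 {X Y A B : Type*} [Fintype X] [Fintype Y] [Fintype A] [Fintype B]
    (G : X → Y → A → B → ℝ) : ℝ :=
  sSup {v | ∃ P, IsQBeh2 P ∧ v = val2 G P}

/-- `ω_{L²}(G)`: the bipartite fully local (classical) value of `G`. -/
def lVal2 {X Y A B : Type*} [Fintype X] [Fintype Y] [Fintype A] [Fintype B]
    (G : X → Y → A → B → ℝ) : ℝ :=
  sSup {v | ∃ P, IsLocal2 P ∧ v = val2 G P}

/-- `ω_{Q³}(G)`: the tripartite quantum value of `G`. -/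
def qVal3 {X Y Z A B C : Type*} [Fintype X] [Fintype Y] [Fintype Z]
    [Fintype A] [Fintype B] [Fintype C] (G : X → Y → Z → A → B → C → ℝ) : ℝ :=
  sSup {v | ∃ P, IsQBeh3 P ∧ v = val3 G P}

/-- `ω_{BL³_G}(G)`: the tripartite general bilocal value of `G`. -/
def bVal3 {X Y Z A B C : Type*} [Fintype X] [Fintype Y] [Fintype Z]
    [Fintype A] [Fintype B] [Fintype C] (G : X → Y → Z → A → B → C → ℝ) : ℝ :=
  sSup {v | ∃ P, IsGenBiloc3 P ∧ v = val3 G P}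

/-- `ω_{BL³_NS}(G)`: the tripartite non-signalling bilocal value of `G`. -/
def nsbVal3 {X Y Z A B C : Type*} [Fintype X] [Fintype Y] [Fintype Z]
    [Fintype A] [Fintype B] [Fintype C] (G : X → Y → Z → A → B → C → ℝ) : ℝ :=
  sSup {v | ∃ P, IsNSBiloc3 P ∧ v = val3 G P}

/-- A (generalized) bipartite game: nonnegative coefficients satisfying the normalization
condition `∑_{x,y} max_{a,b} G^{ab}_{xy} ≤ 1`. -/
def IsGame2 {X Y A B : Type*} [Fintype X] [Fintype Y] [Fintype A] [Fintype B]
    (G : X → Y → A → B → ℝ) : Prop :=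
  (∀ x y a b, 0 ≤ G x y a b) ∧ (∑ x, ∑ y, (⨆ a, ⨆ b, G x y a b)) ≤ 1

/-- The tripartite functional `Ĝ` built from three instances of a bipartite functional `G`:
one instance is played by Alice–Bob, one by Alice–Charlie and one by Bob–Charlie, i.e.
`Ĝ^{a₁a₂,b₁b₂,c₁c₂}_{x₁x₂,y₁y₂,z₁z₂} = G^{a₁b₁}_{x₁y₁} G^{a₂c₁}_{x₂z₁} G^{b₂c₂}_{y₂z₂}`. -/
def Ghat {I O : Type*} (G : I → I → O → O → ℝ) :
    I × I → I × I → I × I → O × O → O × O → O × O → ℝ :=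
  fun x y z a b c => G x.1 y.1 a.1 b.1 * G x.2 z.1 a.2 c.1 * G y.2 z.2 b.2 c.2

/-- The two-fold tensor product (parallel repetition) `G^{⊗2}` of a bipartite functional:
coefficients `G^{a₁b₁}_{x₁y₁} G^{a₂b₂}_{x₂y₂}`. -/
def tensor2 {I O : Type*} (G : I → I → O → O → ℝ) :
    I × I → I × I → O × O → O × O → ℝ :=
  fun x y a b => G x.1 y.1 a.1 b.1 * G x.2 y.2 a.2 b.2

section AuxLemmas

open Matrix Finset

set_option linter.unusedSectionVars false

variable {n m : Type*} [Fintype n] [Fintype m] [DecidableEq n] [DecidableEq m]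

lemma kron_conjT (A : Matrix n n ℂ) (B : Matrix m m ℂ) :
    (A ⊗ₖ B)ᴴ = Aᴴ ⊗ₖ Bᴴ := by
  ext ⟨i₁, i₂⟩ ⟨j₁, j₂⟩
  simp [Matrix.conjTranspose_apply, Matrix.kroneckerMap_apply, star_mul']

lemma psd_kron {A : Matrix n n ℂ} {B : Matrix m m ℂ}
    (hA : A.PosSemidef) (hB : B.PosSemidef) : (A ⊗ₖ B).PosSemidef := by
  exact hA.kronecker hB

lemma quadform_eq_dot (M : Matrix n n ℂ) (ψ : n → ℂ) :
    ∑ i, ∑ j, (starRingEnd ℂ) (ψ i) * M i j * ψ j = star ψ ⬝ᵥ M *ᵥ ψ := by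
  simp only [dotProduct, Matrix.mulVec, Pi.star_apply, Finset.mul_sum, mul_assoc]
  rfl

lemma sum_kron {ι κ : Type*} [Fintype ι] [Fintype κ]
    (E : ι → Matrix n n ℂ) (F : κ → Matrix m m ℂ) :
    ∑ p : ι × κ, E p.1 ⊗ₖ F p.2 = (∑ i, E i) ⊗ₖ ∑ j, F j := by
  ext ⟨i, j⟩ ⟨k, l⟩
  simp [Matrix.sum_apply, Fintype.sum_prod_type, Finset.sum_mul, Finset.mul_sum]
  rw [Finset.sum_comm]

lemma sum_triple_factor {ι κ μ M : Type*} [Fintype ι] [Fintype κ] [Fintype μ]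
    [CommSemiring M] (f : ι → M) (g : κ → M) (h : μ → M) :
    ∑ t : ι × κ × μ, f t.1 * g t.2.1 * h t.2.2
      = (∑ i, f i) * (∑ j, g j) * (∑ k, h k) := by
  rw [Fintype.sum_prod_type]
  simp_rw [Fintype.sum_prod_type, mul_assoc, ← Finset.mul_sum, ← Finset.sum_mul]

lemma sum_quadform {ι : Type*} [Fintype ι] (M : ι → Matrix n n ℂ) (ψ : n → ℂ) :
    ∑ t, ∑ i, ∑ j, (starRingEnd ℂ) (ψ i) * M t i j * ψ j
      = ∑ i, ∑ j, (starRingEnd ℂ) (ψ i) * ((∑ t, M t) i j) * ψ j := by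
  rw [Finset.sum_comm]
  congr 1; ext i
  rw [Finset.sum_comm]
  simp [Matrix.sum_apply, Finset.mul_sum, Finset.sum_mul]

lemma quadform_one (ψ : n → ℂ) :
    ∑ i, ∑ j, (starRingEnd ℂ) (ψ i) * (1 : Matrix n n ℂ) i j * ψ j
      = ((∑ i, Complex.normSq (ψ i) : ℝ) : ℂ) := by
  push_cast
  simp [Matrix.one_apply, mul_ite, Finset.sum_ite_eq, Complex.normSq_eq_conj_mul_self]

/-- shuffle equivalence used to regroup three bipartite systems into three parties -/
def sh3 {α₁ α₂ β₁ β₂ γ₁ γ₂ : Type*} :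
    ((α₁ × β₁) × (α₂ × γ₁) × (β₂ × γ₂)) ≃ ((α₁ × α₂) × (β₁ × β₂) × (γ₁ × γ₂)) where
  toFun t := ((t.1.1, t.2.1.1), (t.1.2, t.2.2.1), (t.2.1.2, t.2.2.2))
  invFun s := ((s.1.1, s.2.1.1), (s.1.2, s.2.2.1), (s.2.1.2, s.2.2.2))
  left_inv _ := rfl
  right_inv _ := rfl

/-- interleaving equivalence for pairs of triples -/
def interleave3 {α α' β β' γ γ' : Type*} :
    ((α × α') × (β × β') × (γ × γ')) ≃ ((α × β × γ) × (α' × β' × γ')) where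
  toFun t := ((t.1.1, t.2.1.1, t.2.2.1), (t.1.2, t.2.1.2, t.2.2.2))
  invFun s := ((s.1.1, s.2.1), (s.1.2.1, s.2.2.1), (s.1.2.2, s.2.2.2))
  left_inv _ := rfl
  right_inv _ := rfl

end AuxLemmas

section BehFacts

open Matrix Finset

lemma qbeh2_facts {X Y A B : Type*} [Fintype A] [Fintype B] {d₁ d₂ : ℕ}
    {P : X → Y → A → B → ℝ} (h : IsQBeh2Dim d₁ d₂ P) :
    (∀ x y a b, 0 ≤ P x y a b) ∧ (∀ x y, ∑ a, ∑ b, P x y a b = 1) := by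
  obtain ⟨ψ, E, F, hψ, hE, hF, hP⟩ := h
  constructor
  · intro x y a b
    have h0 : (0 : ℂ) ≤ ((P x y a b : ℝ) : ℂ) := by
      rw [hP, quadform_eq_dot]
      exact (psd_kron ((hE x).1 a) ((hF y).1 b)).dotProduct_mulVec_nonneg ψ
    exact Complex.zero_le_real.mp h0
  · intro x y
    have key : ((∑ a, ∑ b, P x y a b : ℝ) : ℂ) = ((1 : ℝ) : ℂ) := by
      calc ((∑ a, ∑ b, P x y a b : ℝ) : ℂ)
          = ∑ p : A × B, ((P x y p.1 p.2 : ℝ) : ℂ) := by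
            rw [Fintype.sum_prod_type]; push_cast; rfl
        _ = ∑ p : A × B, ∑ i, ∑ j,
              (starRingEnd ℂ) (ψ i) * ((E x p.1 ⊗ₖ F y p.2) i j) * ψ j := by
            exact Finset.sum_congr rfl fun p _ => hP x y p.1 p.2
        _ = ∑ i, ∑ j, (starRingEnd ℂ) (ψ i) *
              ((∑ p : A × B, E x p.1 ⊗ₖ F y p.2) i j) * ψ j :=
            sum_quadform _ ψ
        _ = ((∑ i, Complex.normSq (ψ i) : ℝ) : ℂ) := by
            rw [sum_kron, (hE x).2, (hF y).2, Matrix.one_kronecker_one, quadform_one]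
        _ = ((1 : ℝ) : ℂ) := by rw [hψ]
    exact_mod_cast key

lemma qbeh3_facts {X Y Z A B C : Type*} [Fintype A] [Fintype B] [Fintype C]
    {d₁ d₂ d₃ : ℕ} {P : X → Y → Z → A → B → C → ℝ} (h : IsQBeh3Dim d₁ d₂ d₃ P) :
    (∀ x y z a b c, 0 ≤ P x y z a b c) ∧
      (∀ x y z, ∑ a, ∑ b, ∑ c, P x y z a b c = 1) := by
  obtain ⟨ψ, E, F, G, hψ, hE, hF, hG, hP⟩ := h
  constructor
  · intro x y z a b c
    have h0 : (0 : ℂ) ≤ ((P x y z a b c : ℝ) : ℂ) := by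
      rw [hP, quadform_eq_dot]
      exact (psd_kron ((hE x).1 a) (psd_kron ((hF y).1 b) ((hG z).1 c))).dotProduct_mulVec_nonneg ψ
    exact Complex.zero_le_real.mp h0
  · intro x y z
    have key : ((∑ a, ∑ b, ∑ c, P x y z a b c : ℝ) : ℂ) = ((1 : ℝ) : ℂ) := by
      calc ((∑ a, ∑ b, ∑ c, P x y z a b c : ℝ) : ℂ)
          = ∑ p : A × B × C, ((P x y z p.1 p.2.1 p.2.2 : ℝ) : ℂ) := by
            rw [Fintype.sum_prod_type]; push_cast
            refine Finset.sum_congr rfl fun a _ => ?_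
            rw [Fintype.sum_prod_type]
        _ = ∑ p : A × B × C, ∑ i, ∑ j, (starRingEnd ℂ) (ψ i) *
              ((E x p.1 ⊗ₖ (F y p.2.1 ⊗ₖ G z p.2.2)) i j) * ψ j := by
            exact Finset.sum_congr rfl fun p _ => hP x y z p.1 p.2.1 p.2.2
        _ = ∑ i, ∑ j, (starRingEnd ℂ) (ψ i) *
              ((∑ p : A × B × C, E x p.1 ⊗ₖ (F y p.2.1 ⊗ₖ G z p.2.2)) i j) * ψ j :=
            sum_quadform _ ψ
        _ = ((∑ i, Complex.normSq (ψ i) : ℝ) : ℂ) := by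
            have h1 : ∑ p : A × B × C, E x p.1 ⊗ₖ (F y p.2.1 ⊗ₖ G z p.2.2)
                = (∑ a, E x a) ⊗ₖ ∑ q : B × C, F y q.1 ⊗ₖ G z q.2 :=
              sum_kron (E x) (fun q : B × C => F y q.1 ⊗ₖ G z q.2)
            rw [h1, sum_kron, (hE x).2, (hF y).2, (hG z).2, Matrix.one_kronecker_one,
              Matrix.one_kronecker_one, quadform_one]
        _ = ((1 : ℝ) : ℂ) := by rw [hψ]
    exact_mod_cast key

end BehFacts

section Construct

open Matrix Finset

/-- The key quadratic-form factorization for the three-copies construction. -/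
lemma quad_factor {d₁ d₂ D₁ D₂ D₃ : ℕ}
    (e₁ : Fin d₁ × Fin d₁ ≃ Fin D₁) (e₂ : Fin d₂ × Fin d₁ ≃ Fin D₂)
    (e₃ : Fin d₂ × Fin d₂ ≃ Fin D₃) (ψ : Fin d₁ × Fin d₂ → ℂ)
    (M₁ M₂ N₂ : Matrix (Fin d₁) (Fin d₁) ℂ) (N₁ O₁ O₂ : Matrix (Fin d₂) (Fin d₂) ℂ) :
    (∑ i, ∑ j, (starRingEnd ℂ)
        ((fun q : Fin D₁ × Fin D₂ × Fin D₃ =>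
          ψ ((e₁.symm q.1).1, (e₂.symm q.2.1).1) *
          ψ ((e₁.symm q.1).2, (e₃.symm q.2.2).1) *
          ψ ((e₂.symm q.2.1).2, (e₃.symm q.2.2).2)) i) *
        ((((M₁ ⊗ₖ M₂).submatrix e₁.symm e₁.symm) ⊗ₖ
          (((N₁ ⊗ₖ N₂).submatrix e₂.symm e₂.symm) ⊗ₖ
           ((O₁ ⊗ₖ O₂).submatrix e₃.symm e₃.symm))) i j) *
        ((fun q : Fin D₁ × Fin D₂ × Fin D₃ =>
          ψ ((e₁.symm q.1).1, (e₂.symm q.2.1).1) *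
          ψ ((e₁.symm q.1).2, (e₃.symm q.2.2).1) *
          ψ ((e₂.symm q.2.1).2, (e₃.symm q.2.2).2)) j))
      = (∑ i, ∑ j, (starRingEnd ℂ) (ψ i) * ((M₁ ⊗ₖ N₁) i j) * ψ j) *
        (∑ i, ∑ j, (starRingEnd ℂ) (ψ i) * ((M₂ ⊗ₖ O₁) i j) * ψ j) *
        (∑ i, ∑ j, (starRingEnd ℂ) (ψ i) * ((N₂ ⊗ₖ O₂) i j) * ψ j) := by
  rw [← Fintype.sum_prod_type']
  rw [← Equiv.sum_comp (interleave3.trans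
    ((sh3.trans (e₁.prodCongr (e₂.prodCongr e₃))).prodCongr
     (sh3.trans (e₁.prodCongr (e₂.prodCongr e₃)))))]
  rw [← Fintype.sum_prod_type'
      (f := fun i j => (starRingEnd ℂ) (ψ i) * ((M₁ ⊗ₖ N₁) i j) * ψ j),
    ← Fintype.sum_prod_type'
      (f := fun i j => (starRingEnd ℂ) (ψ i) * ((M₂ ⊗ₖ O₁) i j) * ψ j),
    ← Fintype.sum_prod_type'
      (f := fun i j => (starRingEnd ℂ) (ψ i) * ((N₂ ⊗ₖ O₂) i j) * ψ j),
    ← sum_triple_factor]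
  refine Finset.sum_congr rfl ?_
  rintro ⟨⟨⟨i₁, j₁⟩, ⟨i₁', j₁'⟩⟩, ⟨⟨i₂, k₁⟩, ⟨i₂', k₁'⟩⟩, ⟨⟨j₂, k₂⟩, ⟨j₂', k₂'⟩⟩⟩ -
  simp only [interleave3, sh3, Equiv.trans_apply, Equiv.coe_fn_mk,
    Equiv.prodCongr_apply, Prod.map, Equiv.symm_apply_apply,
    Matrix.submatrix_apply, Matrix.kroneckerMap_apply, _root_.map_mul]
  ring

/-- Given a bipartite quantum strategy, three copies played across the three bipartitions
give a tripartite quantum strategy whose behaviour is the product of three copies of the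
bipartite behaviour. -/
lemma qbeh3_construct {X Y A B : Type*} [Fintype A] [Fintype B] {d₁ d₂ D₁ D₂ D₃ : ℕ}
    (e₁ : Fin d₁ × Fin d₁ ≃ Fin D₁) (e₂ : Fin d₂ × Fin d₁ ≃ Fin D₂)
    (e₃ : Fin d₂ × Fin d₂ ≃ Fin D₃)
    {P : X → Y → A → B → ℝ} (h : IsQBeh2Dim d₁ d₂ P) :
    IsQBeh3Dim D₁ D₂ D₃ (fun (x : X × X) (y : Y × X) (z : Y × Y)
        (a : A × A) (b : B × A) (c : B × B) =>
      P x.1 y.1 a.1 b.1 * P x.2 z.1 a.2 c.1 * P y.2 z.2 b.2 c.2) := by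
  obtain ⟨ψ, E, F, hψ, hE, hF, hP⟩ := h
  refine ⟨fun q => ψ ((e₁.symm q.1).1, (e₂.symm q.2.1).1) *
        ψ ((e₁.symm q.1).2, (e₃.symm q.2.2).1) *
        ψ ((e₂.symm q.2.1).2, (e₃.symm q.2.2).2),
    fun x a => (E x.1 a.1 ⊗ₖ E x.2 a.2).submatrix e₁.symm e₁.symm,
    fun y b => (F y.1 b.1 ⊗ₖ E y.2 b.2).submatrix e₂.symm e₂.symm,
    fun z c => (F z.1 c.1 ⊗ₖ F z.2 c.2).submatrix e₃.symm e₃.symm,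
    ?_, ?_, ?_, ?_, ?_⟩
  · -- normalization
    rw [← Equiv.sum_comp (sh3.trans (e₁.prodCongr (e₂.prodCongr e₃)))]
    have hpt : ∀ t : (Fin d₁ × Fin d₂) × (Fin d₁ × Fin d₂) × (Fin d₁ × Fin d₂),
        Complex.normSq ((fun q => ψ ((e₁.symm q.1).1, (e₂.symm q.2.1).1) *
            ψ ((e₁.symm q.1).2, (e₃.symm q.2.2).1) *
            ψ ((e₂.symm q.2.1).2, (e₃.symm q.2.2).2))
          ((sh3.trans (e₁.prodCongr (e₂.prodCongr e₃))) t))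
        = Complex.normSq (ψ t.1) * Complex.normSq (ψ t.2.1) * Complex.normSq (ψ t.2.2) := by
      rintro ⟨⟨i₁, j₁⟩, ⟨i₂, k₁⟩, ⟨j₂, k₂⟩⟩
      simp [sh3, Equiv.prodCongr_apply, Prod.map, Complex.normSq_mul]
    rw [Finset.sum_congr rfl fun t _ => hpt t,
      sum_triple_factor (fun p => Complex.normSq (ψ p)) (fun p => Complex.normSq (ψ p))
        (fun p => Complex.normSq (ψ p)), hψ]
    norm_num
  · -- Alice's POVMs
    intro x
    refine ⟨fun a => (psd_kron ((hE x.1).1 a.1) ((hE x.2).1 a.2)).submatrix _, ?_⟩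
    have : ∑ a : A × A, (E x.1 a.1 ⊗ₖ E x.2 a.2).submatrix e₁.symm e₁.symm
        = (∑ a : A × A, E x.1 a.1 ⊗ₖ E x.2 a.2).submatrix e₁.symm e₁.symm := by
      ext i j; simp [Matrix.submatrix_apply, Matrix.sum_apply]
    rw [this, sum_kron, (hE x.1).2, (hE x.2).2, Matrix.one_kronecker_one,
      Matrix.submatrix_one_equiv]
  · intro y
    refine ⟨fun b => (psd_kron ((hF y.1).1 b.1) ((hE y.2).1 b.2)).submatrix _, ?_⟩
    have : ∑ b : B × A, (F y.1 b.1 ⊗ₖ E y.2 b.2).submatrix e₂.symm e₂.symm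
        = (∑ b : B × A, F y.1 b.1 ⊗ₖ E y.2 b.2).submatrix e₂.symm e₂.symm := by
      ext i j; simp [Matrix.submatrix_apply, Matrix.sum_apply]
    rw [this, sum_kron, (hF y.1).2, (hE y.2).2, Matrix.one_kronecker_one,
      Matrix.submatrix_one_equiv]
  · intro z
    refine ⟨fun c => (psd_kron ((hF z.1).1 c.1) ((hF z.2).1 c.2)).submatrix _, ?_⟩
    have : ∑ c : B × B, (F z.1 c.1 ⊗ₖ F z.2 c.2).submatrix e₃.symm e₃.symm
        = (∑ c : B × B, F z.1 c.1 ⊗ₖ F z.2 c.2).submatrix e₃.symm e₃.symm := by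
      ext i j; simp [Matrix.submatrix_apply, Matrix.sum_apply]
    rw [this, sum_kron, (hF z.1).2, (hF z.2).2, Matrix.one_kronecker_one,
      Matrix.submatrix_one_equiv]
  · -- the behaviour
    intro x y z a b c
    rw [quad_factor e₁ e₂ e₃ ψ, ← hP x.1 y.1 a.1 b.1, ← hP x.2 z.1 a.2 c.1,
      ← hP y.2 z.2 b.2 c.2]
    push_cast
    ring

end Construct

section ValFactor

open Finset

/-- regrouping equivalence for three bipartite games into a tripartite one -/
def tripleGame {ι κ : Type*} :
    ((ι × ι × κ × κ) × (ι × ι × κ × κ) × (ι × ι × κ × κ)) ≃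
      ((ι × ι) × (ι × ι) × (ι × ι) × (κ × κ) × (κ × κ) × (κ × κ)) where
  toFun t := ((t.1.1, t.2.1.1), (t.1.2.1, t.2.2.1), (t.2.1.2.1, t.2.2.2.1),
              (t.1.2.2.1, t.2.1.2.2.1), (t.1.2.2.2, t.2.2.2.2.1),
              (t.2.1.2.2.2, t.2.2.2.2.2))
  invFun s := ((s.1.1, s.2.1.1, s.2.2.2.1.1, s.2.2.2.2.1.1),
               (s.1.2, s.2.2.1.1, s.2.2.2.1.2, s.2.2.2.2.2.1),
               (s.2.1.2, s.2.2.1.2, s.2.2.2.2.1.2, s.2.2.2.2.2.2))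
  left_inv _ := rfl
  right_inv _ := rfl

set_option maxHeartbeats 2000000 in
lemma val3_Ghat {N K : ℕ} (G P : Fin N → Fin N → Fin K → Fin K → ℝ) :
    val3 (Ghat G) (fun x y z a b c =>
      P x.1 y.1 a.1 b.1 * P x.2 z.1 a.2 c.1 * P y.2 z.2 b.2 c.2) = val2 G P ^ 3 := by
  have hv : val2 G P = ∑ q : Fin N × Fin N × Fin K × Fin K,
      G q.1 q.2.1 q.2.2.1 q.2.2.2 * P q.1 q.2.1 q.2.2.1 q.2.2.2 := by
    simp only [val2, Fintype.sum_prod_type]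
  have h3 : val2 G P ^ 3 = ∑ t : (Fin N × Fin N × Fin K × Fin K) ×
      (Fin N × Fin N × Fin K × Fin K) × (Fin N × Fin N × Fin K × Fin K),
      (G t.1.1 t.1.2.1 t.1.2.2.1 t.1.2.2.2 * P t.1.1 t.1.2.1 t.1.2.2.1 t.1.2.2.2) *
      (G t.2.1.1 t.2.1.2.1 t.2.1.2.2.1 t.2.1.2.2.2 *
        P t.2.1.1 t.2.1.2.1 t.2.1.2.2.1 t.2.1.2.2.2) *
      (G t.2.2.1 t.2.2.2.1 t.2.2.2.2.1 t.2.2.2.2.2 *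
        P t.2.2.1 t.2.2.2.1 t.2.2.2.2.1 t.2.2.2.2.2) := by
    rw [sum_triple_factor
      (fun q : Fin N × Fin N × Fin K × Fin K =>
        G q.1 q.2.1 q.2.2.1 q.2.2.2 * P q.1 q.2.1 q.2.2.1 q.2.2.2)
      (fun q : Fin N × Fin N × Fin K × Fin K =>
        G q.1 q.2.1 q.2.2.1 q.2.2.2 * P q.1 q.2.1 q.2.2.1 q.2.2.2)
      (fun q : Fin N × Fin N × Fin K × Fin K =>
        G q.1 q.2.1 q.2.2.1 q.2.2.2 * P q.1 q.2.1 q.2.2.1 q.2.2.2), hv]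
    ring
  have hval3 : val3 (Ghat G) (fun x y z a b c =>
      P x.1 y.1 a.1 b.1 * P x.2 z.1 a.2 c.1 * P y.2 z.2 b.2 c.2)
      = ∑ s : (Fin N × Fin N) × (Fin N × Fin N) × (Fin N × Fin N) ×
          (Fin K × Fin K) × (Fin K × Fin K) × (Fin K × Fin K),
        Ghat G s.1 s.2.1 s.2.2.1 s.2.2.2.1 s.2.2.2.2.1 s.2.2.2.2.2 *
          ((fun (x y z : Fin N × Fin N) (a b c : Fin K × Fin K) =>
            P x.1 y.1 a.1 b.1 * P x.2 z.1 a.2 c.1 * P y.2 z.2 b.2 c.2)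
           s.1 s.2.1 s.2.2.1 s.2.2.2.1 s.2.2.2.2.1 s.2.2.2.2.2) := by
    simp (config := { maxSteps := 1000000 }) only [val3, Fintype.sum_prod_type]
  rw [hval3, h3]
  refine (Fintype.sum_equiv tripleGame _ _ ?_).symm
  rintro ⟨⟨x₁, y₁, a₁, b₁⟩, ⟨x₂, z₁, a₂, c₁⟩, ⟨y₂, z₂, b₂, c₂⟩⟩
  simp only [tripleGame, Equiv.coe_fn_mk, Ghat]
  ring

end ValFactor

section Bounds

open Finset

lemma qbeh2_le_one {X Y A B : Type*} [Fintype A] [Fintype B] {d₁ d₂ : ℕ}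
    {P : X → Y → A → B → ℝ} (h : IsQBeh2Dim d₁ d₂ P) :
    ∀ x y a b, P x y a b ≤ 1 := by
  intro x y a b
  obtain ⟨hnn, hsum⟩ := qbeh2_facts h
  calc P x y a b ≤ ∑ b', P x y a b' :=
        Finset.single_le_sum (fun b' _ => hnn x y a b') (mem_univ b)
    _ ≤ ∑ a', ∑ b', P x y a' b' :=
        Finset.single_le_sum (f := fun a' => ∑ b', P x y a' b')
          (fun a' _ => Finset.sum_nonneg fun b' _ => hnn x y a' b') (mem_univ a)
    _ = 1 := hsum x y

lemma qbeh3_le_one {X Y Z A B C : Type*} [Fintype A] [Fintype B] [Fintype C]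
    {d₁ d₂ d₃ : ℕ} {P : X → Y → Z → A → B → C → ℝ} (h : IsQBeh3Dim d₁ d₂ d₃ P) :
    ∀ x y z a b c, P x y z a b c ≤ 1 := by
  intro x y z a b c
  obtain ⟨hnn, hsum⟩ := qbeh3_facts h
  calc P x y z a b c ≤ ∑ c', P x y z a b c' :=
        Finset.single_le_sum (fun c' _ => hnn x y z a b c') (mem_univ c)
    _ ≤ ∑ b', ∑ c', P x y z a b' c' :=
        Finset.single_le_sum (f := fun b' => ∑ c', P x y z a b' c')
          (fun b' _ => Finset.sum_nonneg fun c' _ => hnn x y z a b' c') (mem_univ b)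
    _ ≤ ∑ a', ∑ b', ∑ c', P x y z a' b' c' :=
        Finset.single_le_sum (f := fun a' => ∑ b', ∑ c', P x y z a' b' c')
          (fun a' _ => Finset.sum_nonneg fun b' _ => Finset.sum_nonneg fun c' _ =>
            hnn x y z a' b' c') (mem_univ a)
    _ = 1 := hsum x y z

end Bounds

/-- for a bipartite Bell functional `G` with nonnegative coefficients, the
tripartite functional `Ĝ` satisfies `ω_{Q³}(Ĝ) ≥ ω_{Q²}(G)³`; moreover, if a bipartite
quantum strategy achieving value `v` for `G` uses a state of local dimension `d`, then a
tripartite quantum strategy achieving value `v³` for `Ĝ` exists using a state of local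
dimension `d²`. -/
theorem unbounded_bell_stmt9 {N K : ℕ} (G : Fin N → Fin N → Fin K → Fin K → ℝ)
    (hpos : ∀ x y a b, 0 ≤ G x y a b) :
    qVal2 G ^ 3 ≤ qVal3 (Ghat G) ∧
    ∀ (d : ℕ) (v : ℝ),
      (∃ P, IsQBeh2Dim d d P ∧ val2 G P = v) →
      ∃ P', IsQBeh3Dim (d ^ 2) (d ^ 2) (d ^ 2) P' ∧ val3 (Ghat G) P' = v ^ 3 := by
  have hGhat_pos : ∀ x y z a b c, 0 ≤ Ghat G x y z a b c := fun x y z a b c =>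
    mul_nonneg (mul_nonneg (hpos _ _ _ _) (hpos _ _ _ _)) (hpos _ _ _ _)
  constructor
  · -- part 1
    set S₂ : Set ℝ := {v | ∃ P, IsQBeh2 P ∧ v = val2 G P} with hS₂
    set S₃ : Set ℝ := {v | ∃ P, IsQBeh3 P ∧ v = val3 (Ghat G) P} with hS₃
    have hb2 : ∀ v ∈ S₂, v ≤ ∑ x, ∑ y, ∑ a, ∑ b, G x y a b := by
      rintro v ⟨P, ⟨d₁, d₂, hP⟩, rfl⟩
      refine Finset.sum_le_sum fun x _ => Finset.sum_le_sum fun y _ =>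
        Finset.sum_le_sum fun a _ => Finset.sum_le_sum fun b _ => ?_
      exact mul_le_of_le_one_right (hpos x y a b) (qbeh2_le_one hP x y a b)
    have hb3 : ∀ v ∈ S₃, v ≤ ∑ x, ∑ y, ∑ z, ∑ a, ∑ b, ∑ c, Ghat G x y z a b c := by
      rintro v ⟨P, ⟨d₁, d₂, d₃, hP⟩, rfl⟩
      refine Finset.sum_le_sum fun x _ => Finset.sum_le_sum fun y _ =>
        Finset.sum_le_sum fun z _ => Finset.sum_le_sum fun a _ =>
        Finset.sum_le_sum fun b _ => Finset.sum_le_sum fun c _ => ?_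
      exact mul_le_of_le_one_right (hGhat_pos x y z a b c) (qbeh3_le_one hP x y z a b c)
    have hBdd2 : BddAbove S₂ := ⟨_, fun v hv => hb2 v hv⟩
    have hBdd3 : BddAbove S₃ := ⟨_, fun v hv => hb3 v hv⟩
    have h3nn : ∀ v ∈ S₃, 0 ≤ v := by
      rintro v ⟨P, ⟨d₁, d₂, d₃, hP⟩, rfl⟩
      refine Finset.sum_nonneg fun x _ => Finset.sum_nonneg fun y _ =>
        Finset.sum_nonneg fun z _ => Finset.sum_nonneg fun a _ =>
        Finset.sum_nonneg fun b _ => Finset.sum_nonneg fun c _ =>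
        mul_nonneg (hGhat_pos x y z a b c) ((qbeh3_facts hP).1 x y z a b c)
    have himg : ∀ v ∈ S₂, v ^ 3 ∈ S₃ := by
      rintro v ⟨P, ⟨d₁, d₂, hP⟩, rfl⟩
      exact ⟨_, ⟨d₁ * d₁, d₂ * d₁, d₂ * d₂,
        qbeh3_construct finProdFinEquiv finProdFinEquiv finProdFinEquiv hP⟩,
        (val3_Ghat G P).symm⟩
    show sSup S₂ ^ 3 ≤ sSup S₃
    rcases Set.eq_empty_or_nonempty S₂ with h2 | h2
    · rw [h2, Real.sSup_empty]
      norm_num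
      exact Real.sSup_nonneg h3nn
    · have hmono : Monotone fun x : ℝ => x ^ 3 :=
        (Odd.strictMono_pow (R := ℝ) ⟨1, by norm_num⟩).monotone
      have hmap : sSup S₂ ^ 3 = sSup ((fun x : ℝ => x ^ 3) '' S₂) :=
        Monotone.map_csSup_of_continuousAt (continuous_pow 3).continuousAt hmono h2 hBdd2
      rw [hmap]
      refine csSup_le_csSup hBdd3 (h2.image _) ?_
      rintro w ⟨v, hv, rfl⟩
      exact himg v hv
  · -- part 2
    rintro d v ⟨P, hP, hval⟩
    have e : Fin d × Fin d ≃ Fin (d ^ 2) := finProdFinEquiv.trans (finCongr (pow_two d).symm)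
    exact ⟨_, qbeh3_construct e e e hP, by rw [val3_Ghat, hval]⟩

end BellGames
end
end

section
/- Let G be a tripartite Bell functional with nonnegative coefficients. If P is a tripartite quantum behaviour in which at least one of the three players' local Hilbert space has dimension at most d, then ⟨G, P⟩ ≤ d · ω_{BL³_G}(G). In particular ω_{Q³_d}(G) ≤ d · ω_{BL³_G}(G), where ω_{Q³_d} denotes the quantum value restricted so that one player has local dimension at most d. -/
open scoped BigOperators
open Kronecker
open scoped ComplexOrder

noncomputable section

namespace BellGames

/-! ### Auxiliary machinery for Statement 15 -/

section Stmt15Aux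

/-- Quadratic form of a matrix. -/
def JPqf {n : Type*} [Fintype n] (M : Matrix n n ℂ) (u : n → ℂ) : ℝ :=
  (∑ i, ∑ j, (starRingEnd ℂ) (u i) * M i j * u j).re

lemma JPsum_eq_dot {n : Type*} [Fintype n] (M : Matrix n n ℂ) (u v : n → ℂ) :
    ∑ i, ∑ j, (starRingEnd ℂ) (u i) * M i j * v j
      = dotProduct (star u) (M.mulVec v) := by
  simp only [dotProduct, Matrix.mulVec, Pi.star_apply, Finset.mul_sum]
  refine Finset.sum_congr rfl fun i _ => Finset.sum_congr rfl fun j _ => ?_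
  simp [mul_comm, mul_assoc, mul_left_comm]

lemma JPkey_decomp {n : Type*} [Fintype n] (B : Matrix n n ℂ) (u v : n → ℂ) :
    dotProduct (star u) ((B.conjTranspose * B).mulVec v)
      = dotProduct (star (B.mulVec u)) (B.mulVec v) := by
  rw [Matrix.star_mulVec, Matrix.dotProduct_mulVec, Matrix.dotProduct_mulVec,
    Matrix.vecMul_vecMul]

lemma JPinner_eq_dot {n : Type*} [Fintype n] (a b : EuclideanSpace ℂ n) :
    (inner ℂ a b : ℂ) = dotProduct (star (a : n → ℂ)) (b : n → ℂ) := by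
  simp [PiLp.inner_apply, dotProduct, mul_comm]

open scoped MatrixOrder in
lemma JPpsd_iff_eq_ct_mul_self {n : Type*} [Fintype n] {M : Matrix n n ℂ} :
    M.PosSemidef ↔ ∃ B : Matrix n n ℂ, M = B.conjTranspose * B := by
  classical
  constructor
  · intro h
    obtain ⟨B, hB⟩ := CStarAlgebra.nonneg_iff_eq_star_mul_self.mp h.nonneg
    exact ⟨B, hB⟩
  · rintro ⟨B, rfl⟩
    exact Matrix.posSemidef_conjTranspose_mul_self B

lemma JPpsd_cs {n : Type*} [Fintype n] {M : Matrix n n ℂ} (hM : M.PosSemidef)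
    (u v : n → ℂ) :
    ‖∑ i, ∑ j, (starRingEnd ℂ) (u i) * M i j * v j‖
      ≤ Real.sqrt (JPqf M u) * Real.sqrt (JPqf M v) := by
  obtain ⟨B, rfl⟩ := JPpsd_iff_eq_ct_mul_self.mp hM
  set a : EuclideanSpace ℂ n := WithLp.toLp 2 (B.mulVec u) with ha
  set b : EuclideanSpace ℂ n := WithLp.toLp 2 (B.mulVec v) with hb
  have h1 : ∑ i, ∑ j, (starRingEnd ℂ) (u i) * (B.conjTranspose * B) i j * v j
      = (inner ℂ a b : ℂ) := by
    rw [JPsum_eq_dot, JPkey_decomp, JPinner_eq_dot]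
  have hqa : Real.sqrt (JPqf (B.conjTranspose * B) u) = ‖a‖ := by
    have : JPqf (B.conjTranspose * B) u = ‖a‖ ^ 2 := by
      rw [JPqf, JPsum_eq_dot, JPkey_decomp, ← JPinner_eq_dot a a]
      exact inner_self_eq_norm_sq (𝕜 := ℂ) a
    rw [this, Real.sqrt_sq (norm_nonneg _)]
  have hqb : Real.sqrt (JPqf (B.conjTranspose * B) v) = ‖b‖ := by
    have : JPqf (B.conjTranspose * B) v = ‖b‖ ^ 2 := by
      rw [JPqf, JPsum_eq_dot, JPkey_decomp, ← JPinner_eq_dot b b]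
      exact inner_self_eq_norm_sq (𝕜 := ℂ) b
    rw [this, Real.sqrt_sq (norm_nonneg _)]
  rw [h1, hqa, hqb]
  exact norm_inner_le_norm _ _

lemma JPqf_nonneg {n : Type*} [Fintype n] {M : Matrix n n ℂ} (hM : M.PosSemidef)
    (u : n → ℂ) : 0 ≤ JPqf M u := by
  obtain ⟨B, rfl⟩ := JPpsd_iff_eq_ct_mul_self.mp hM
  set a : EuclideanSpace ℂ n := WithLp.toLp 2 (B.mulVec u) with ha
  rw [JPqf, JPsum_eq_dot, JPkey_decomp, ← JPinner_eq_dot a a]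
  have h : ((inner ℂ a a : ℂ)).re = ‖a‖ ^ 2 := inner_self_eq_norm_sq (𝕜 := ℂ) a
  rw [h]
  positivity

lemma JPqf_single {n : Type*} [Fintype n] [DecidableEq n] (M : Matrix n n ℂ) (k : n) :
    JPqf M (Pi.single k 1) = (M k k).re := by
  rw [JPqf]
  rw [Finset.sum_eq_single k]
  · rw [Finset.sum_eq_single k]
    · simp
    · intro i _ hi; simp [Pi.single_apply, hi]
    · simp
  · intro i _ hi; simp [Pi.single_apply, hi]
  · simp

lemma JPpsd_entry {n : Type*} [Fintype n] [DecidableEq n] {M : Matrix n n ℂ}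
    (hM : M.PosSemidef) (k l : n) :
    ‖M k l‖ ≤ Real.sqrt (M k k).re * Real.sqrt (M l l).re := by
  have h := JPpsd_cs hM (Pi.single k 1) (Pi.single l 1)
  rw [JPqf_single, JPqf_single] at h
  convert h using 2
  rw [Finset.sum_eq_single k]
  · rw [Finset.sum_eq_single l]
    · simp
    · intro i _ hi; simp [Pi.single_apply, hi]
    · simp
  · intro i _ hi; simp [Pi.single_apply, hi]
  · simp

lemma JPpsd_diag_nonneg {n : Type*} [Fintype n] [DecidableEq n] {M : Matrix n n ℂ}
    (hM : M.PosSemidef) (k : n) : 0 ≤ (M k k).re := by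
  have := JPqf_nonneg hM (Pi.single k 1)
  rwa [JPqf_single] at this

lemma JPconjTranspose_kron {l m n p : Type*} (A : Matrix l m ℂ) (B : Matrix n p ℂ) :
    (A.conjTranspose) ⊗ₖ (B.conjTranspose) = (A ⊗ₖ B).conjTranspose := by
  ext i j
  simp [Matrix.kroneckerMap_apply, Matrix.conjTranspose_apply]

lemma JPpsd_kron {m n : Type*} [Fintype m] [Fintype n] {A : Matrix m m ℂ}
    {B : Matrix n n ℂ} (hA : A.PosSemidef) (hB : B.PosSemidef) :
    (A ⊗ₖ B).PosSemidef := by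
  obtain ⟨A', rfl⟩ := JPpsd_iff_eq_ct_mul_self.mp hA
  obtain ⟨B', rfl⟩ := JPpsd_iff_eq_ct_mul_self.mp hB
  rw [Matrix.mul_kronecker_mul, JPconjTranspose_kron]
  exact JPpsd_iff_eq_ct_mul_self.mpr ⟨_, rfl⟩

lemma JPkron_sum_one {m n A B : Type*} [Fintype m] [Fintype n] [DecidableEq m]
    [DecidableEq n] [Fintype A] [Fintype B]
    (E : A → Matrix m m ℂ) (F : B → Matrix n n ℂ)
    (hE : ∑ a, E a = 1) (hF : ∑ b, F b = 1) :
    ∑ ab : A × B, (E ab.1) ⊗ₖ (F ab.2) = 1 := by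
  have h : ∑ ab : A × B, (E ab.1) ⊗ₖ (F ab.2) = (∑ a, E a) ⊗ₖ (∑ b, F b) := by
    ext i j
    simp only [Matrix.sum_apply, Matrix.kroneckerMap_apply, Fintype.sum_prod_type,
      Finset.sum_mul, Finset.mul_sum]
    rw [Finset.sum_comm]
  rw [h, hE, hF, Matrix.one_kronecker_one]

lemma JPqf_sum {n ι : Type*} [Fintype n] [Fintype ι] (K : ι → Matrix n n ℂ)
    (w : n → ℂ) : ∑ a, JPqf (K a) w = JPqf (∑ a, K a) w := by
  unfold JPqf
  rw [← Complex.re_sum]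
  congr 1
  rw [Finset.sum_comm]
  refine Finset.sum_congr rfl fun i _ => ?_
  rw [Finset.sum_comm]
  refine Finset.sum_congr rfl fun j _ => ?_
  simp [Matrix.sum_apply, Finset.mul_sum, Finset.sum_mul]

lemma JPqf_one {n : Type*} [Fintype n] [DecidableEq n] (w : n → ℂ) :
    JPqf 1 w = ∑ i, Complex.normSq (w i) := by
  unfold JPqf
  have h : ∀ i : n, ∑ j, (starRingEnd ℂ) (w i) * (1 : Matrix n n ℂ) i j * w j
      = ((Complex.normSq (w i) : ℝ) : ℂ) := by
    intro i
    rw [Finset.sum_eq_single i]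
    · simp [Matrix.one_apply, Complex.normSq_eq_conj_mul_self]
    · intro j _ hj; simp [Matrix.one_apply, Ne.symm hj]
    · simp
  rw [Finset.sum_congr rfl fun i _ => h i]
  rw [← Complex.ofReal_sum]
  simp

lemma JPsum4_reorder {α β γ δ : Type*} [Fintype α] [Fintype β] [Fintype γ] [Fintype δ]
    (f : α → β → γ → δ → ℂ) :
    ∑ a, ∑ b, ∑ c, ∑ d, f a b c d = ∑ b, ∑ d, ∑ a, ∑ c, f a b c d := by
  rw [Finset.sum_comm]
  refine Finset.sum_congr rfl fun b _ => ?_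
  calc ∑ a, ∑ c, ∑ d, f a b c d
      = ∑ a, ∑ d, ∑ c, f a b c d :=
        Finset.sum_congr rfl fun a _ => Finset.sum_comm
    _ = ∑ d, ∑ a, ∑ c, f a b c d := Finset.sum_comm

lemma JPsum6_eq {α₁ α₂ α₃ α₄ α₅ α₆ : Type*} [Fintype α₁] [Fintype α₂] [Fintype α₃]
    [Fintype α₄] [Fintype α₅] [Fintype α₆] (f : α₁ → α₂ → α₃ → α₄ → α₅ → α₆ → ℝ) :
    ∑ t : α₁ × α₂ × α₃ × α₄ × α₅ × α₆,
        f t.1 t.2.1 t.2.2.1 t.2.2.2.1 t.2.2.2.2.1 t.2.2.2.2.2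
      = ∑ a₁, ∑ a₂, ∑ a₃, ∑ a₄, ∑ a₅, ∑ a₆, f a₁ a₂ a₃ a₄ a₅ a₆ := by
  simp only [Fintype.sum_prod_type]

lemma JPreorder_yzxbca {X Y Z A B C : Type*} [Fintype X] [Fintype Y] [Fintype Z]
    [Fintype A] [Fintype B] [Fintype C] (f : X → Y → Z → A → B → C → ℝ) :
    (∑ y, ∑ z, ∑ x, ∑ b, ∑ c, ∑ a, f x y z a b c)
      = ∑ x, ∑ y, ∑ z, ∑ a, ∑ b, ∑ c, f x y z a b c := by
  rw [← JPsum6_eq (fun y z x b c a => f x y z a b c), ← JPsum6_eq f]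
  exact Fintype.sum_equiv
    ⟨fun s => (s.2.2.1, s.1, s.2.1, s.2.2.2.2.2, s.2.2.2.1, s.2.2.2.2.1),
     fun t => (t.2.1, t.2.2.1, t.1, t.2.2.2.2.1, t.2.2.2.2.2, t.2.2.2.1),
     fun _ => rfl, fun _ => rfl⟩ _ _ (fun s => rfl)

lemma JPreorder_xzyacb {X Y Z A B C : Type*} [Fintype X] [Fintype Y] [Fintype Z]
    [Fintype A] [Fintype B] [Fintype C] (f : X → Y → Z → A → B → C → ℝ) :
    (∑ x, ∑ z, ∑ y, ∑ a, ∑ c, ∑ b, f x y z a b c)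
      = ∑ x, ∑ y, ∑ z, ∑ a, ∑ b, ∑ c, f x y z a b c := by
  rw [← JPsum6_eq (fun x z y a c b => f x y z a b c), ← JPsum6_eq f]
  exact Fintype.sum_equiv
    ⟨fun s => (s.1, s.2.2.1, s.2.1, s.2.2.2.1, s.2.2.2.2.2, s.2.2.2.2.1),
     fun t => (t.1, t.2.2.1, t.2.1, t.2.2.2.1, t.2.2.2.2.2, t.2.2.2.2.1),
     fun _ => rfl, fun _ => rfl⟩ _ _ (fun s => rfl)

lemma JPcore {X₂ Z' A₂ C' : Type*} [Fintype X₂] [Fintype Z'] [Fintype A₂] [Fintype C']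
    [Nonempty A₂] {n : Type*} [Fintype n] [DecidableEq n] {e : ℕ}
    (H : X₂ → Z' → A₂ → C' → ℝ) (hH : ∀ x z a c, 0 ≤ H x z a c)
    (K : X₂ → A₂ → Matrix n n ℂ)
    (hKpsd : ∀ x a, (K x a).PosSemidef) (hKsum : ∀ x, ∑ a, K x a = 1)
    (Υ : Z' → C' → Matrix (Fin e) (Fin e) ℂ)
    (hUpsd : ∀ z c, (Υ z c).PosSemidef) (hUsum : ∀ z, ∑ c, Υ z c = 1)
    (φ : n × Fin e → ℂ) (hφ : ∑ i, Complex.normSq (φ i) = 1) :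
    ∃ (p : Fin e → ℝ) (Q : Fin e → X₂ → A₂ → ℝ) (R : Fin e → Z' → C' → ℝ),
      (∀ k, 0 ≤ p k) ∧ (∑ k, p k) = 1 ∧
      (∀ k, (∀ x a, 0 ≤ Q k x a) ∧ ∀ x, ∑ a, Q k x a = 1) ∧
      (∀ k, (∀ z c, 0 ≤ R k z c) ∧ ∀ z, ∑ c, R k z c = 1) ∧
      (∑ x, ∑ z, ∑ a, ∑ c, H x z a c *
          (∑ i : n × Fin e, ∑ j : n × Fin e,
            (starRingEnd ℂ) (φ i) * (K x a i.1 j.1 * Υ z c i.2 j.2) * φ j).re)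
        ≤ (e : ℝ) * ∑ x, ∑ z, ∑ a, ∑ c, H x z a c * ∑ k, p k * Q k x a * R k z c := by
  classical
  set φk : Fin e → n → ℂ := fun k i => φ (i, k) with hφk
  set Af : X₂ → A₂ → Fin e → ℝ := fun x a k => JPqf (K x a) (φk k) with hAf
  set Uf : Z' → C' → Fin e → ℝ := fun z c k => ((Υ z c) k k).re with hUf
  set p : Fin e → ℝ := fun k => ∑ i, Complex.normSq (φ (i, k)) with hp
  have hp0 : ∀ k, 0 ≤ p k := fun k =>
    Finset.sum_nonneg fun i _ => Complex.normSq_nonneg _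
  have hpsum : ∑ k, p k = 1 := by
    rw [← hφ, Fintype.sum_prod_type]
    exact Finset.sum_comm
  have hA0 : ∀ x a k, 0 ≤ Af x a k := fun x a k => JPqf_nonneg (hKpsd x a) _
  have hU0 : ∀ z c k, 0 ≤ Uf z c k := fun z c k => JPpsd_diag_nonneg (hUpsd z c) k
  have hAsum : ∀ x k, ∑ a, Af x a k = p k := by
    intro x k
    have h := JPqf_sum (fun a => K x a) (φk k)
    rw [hKsum x] at h
    rw [hAf]
    simpa [JPqf_one] using h
  have hUsum' : ∀ z k, ∑ c, Uf z c k = 1 := by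
    intro z k
    have h : ∑ c, ((Υ z c) k k).re = ((∑ c, Υ z c) k k).re := by
      rw [Matrix.sum_apply, Complex.re_sum]
    rw [hUf]
    simp only [h, hUsum z, Matrix.one_apply_eq, Complex.one_re]
  have hAzero : ∀ x a k, p k = 0 → Af x a k = 0 := by
    intro x a k hk
    have hzero : ∀ i, φ (i, k) = 0 := by
      intro i
      have h := (Finset.sum_eq_zero_iff_of_nonneg
        (fun i _ => Complex.normSq_nonneg (φ (i, k)))).mp hk i (Finset.mem_univ i)
      exact Complex.normSq_eq_zero.mp h
    have h : φk k = fun _ => 0 := funext fun i => hzero i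
    rw [hAf]
    simp only [h]
    simp [JPqf]
  refine ⟨p, fun k x a => if p k = 0 then (Fintype.card A₂ : ℝ)⁻¹ else Af x a k / p k,
    fun k z c => Uf z c k, hp0, hpsum, ?_, ?_, ?_⟩
  · intro k
    constructor
    · intro x a
      by_cases h : p k = 0
      · simp [h]
      · simp only [h, if_false]
        exact div_nonneg (hA0 x a k) (hp0 k)
    · intro x
      by_cases h : p k = 0
      · simp only [h, if_true, Finset.sum_const, Finset.card_univ, nsmul_eq_mul]
        rw [mul_inv_cancel₀]
        exact Nat.cast_ne_zero.mpr Fintype.card_ne_zero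
      · simp only [h, if_false, ← Finset.sum_div, hAsum x k]
        exact div_self h
  · intro k
    exact ⟨fun z c => hU0 z c k, fun z => hUsum' z k⟩
  · have hPQR : ∀ x z a c k,
        p k * (if p k = 0 then (Fintype.card A₂ : ℝ)⁻¹ else Af x a k / p k) * Uf z c k
          = Af x a k * Uf z c k := by
      intro x z a c k
      by_cases h : p k = 0
      · rw [h, hAzero x a k h]; ring
      · simp only [h, if_false]; field_simp
    have step : ∀ x z a c,
        (∑ i : n × Fin e, ∑ j : n × Fin e,
            (starRingEnd ℂ) (φ i) * (K x a i.1 j.1 * Υ z c i.2 j.2) * φ j).re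
          ≤ (e : ℝ) * ∑ k, Af x a k * Uf z c k := by
      intro x z a c
      have regroup : ∑ i : n × Fin e, ∑ j : n × Fin e,
          (starRingEnd ℂ) (φ i) * (K x a i.1 j.1 * Υ z c i.2 j.2) * φ j
          = ∑ k, ∑ l, (∑ i : n, ∑ j : n,
              (starRingEnd ℂ) (φ (i, k)) * K x a i j * φ (j, l)) * Υ z c k l := by
        rw [Fintype.sum_prod_type]
        have inner1 : ∀ i₁ : n, ∀ i₂ : Fin e,
            ∑ j : n × Fin e, (starRingEnd ℂ) (φ (i₁, i₂)) *
              (K x a i₁ j.1 * Υ z c i₂ j.2) * φ j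
            = ∑ j₁ : n, ∑ j₂ : Fin e, (starRingEnd ℂ) (φ (i₁, i₂)) *
              (K x a i₁ j₁ * Υ z c i₂ j₂) * φ (j₁, j₂) := by
          intro i₁ i₂; rw [Fintype.sum_prod_type]
        simp only [inner1]
        rw [JPsum4_reorder (fun i₁ i₂ j₁ j₂ => (starRingEnd ℂ) (φ (i₁, i₂)) *
          (K x a i₁ j₁ * Υ z c i₂ j₂) * φ (j₁, j₂))]
        refine Finset.sum_congr rfl fun k _ => Finset.sum_congr rfl fun l _ => ?_
        rw [Finset.sum_mul]
        refine Finset.sum_congr rfl fun i _ => ?_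
        rw [Finset.sum_mul]
        refine Finset.sum_congr rfl fun j _ => ?_
        ring
      rw [regroup]
      have b1 : (∑ k, ∑ l, (∑ i : n, ∑ j : n,
            (starRingEnd ℂ) (φ (i, k)) * K x a i j * φ (j, l)) * Υ z c k l).re
          ≤ ∑ k, ∑ l, (Real.sqrt (Af x a k) * Real.sqrt (Uf z c k)) *
              (Real.sqrt (Af x a l) * Real.sqrt (Uf z c l)) := by
        refine le_trans (Complex.re_le_norm _) ?_
        refine le_trans (norm_sum_le _ _) ?_
        refine Finset.sum_le_sum fun k _ => ?_
        refine le_trans (norm_sum_le _ _) ?_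
        refine Finset.sum_le_sum fun l _ => ?_
        rw [norm_mul]
        have h1 : ‖∑ i : n, ∑ j : n,
            (starRingEnd ℂ) (φ (i, k)) * K x a i j * φ (j, l)‖
            ≤ Real.sqrt (Af x a k) * Real.sqrt (Af x a l) :=
          JPpsd_cs (hKpsd x a) (φk k) (φk l)
        have h2 : ‖Υ z c k l‖ ≤ Real.sqrt (Uf z c k) * Real.sqrt (Uf z c l) :=
          JPpsd_entry (hUpsd z c) k l
        calc ‖∑ i : n, ∑ j : n,
              (starRingEnd ℂ) (φ (i, k)) * K x a i j * φ (j, l)‖ * ‖Υ z c k l‖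
            ≤ (Real.sqrt (Af x a k) * Real.sqrt (Af x a l)) *
              (Real.sqrt (Uf z c k) * Real.sqrt (Uf z c l)) := by
              refine mul_le_mul h1 h2 (norm_nonneg _) ?_
              positivity
          _ = (Real.sqrt (Af x a k) * Real.sqrt (Uf z c k)) *
              (Real.sqrt (Af x a l) * Real.sqrt (Uf z c l)) := by ring
      refine le_trans b1 ?_
      have b2 : ∑ k, ∑ l, (Real.sqrt (Af x a k) * Real.sqrt (Uf z c k)) *
            (Real.sqrt (Af x a l) * Real.sqrt (Uf z c l))
          = (∑ k, Real.sqrt (Af x a k) * Real.sqrt (Uf z c k)) ^ 2 := by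
        rw [sq, Finset.sum_mul_sum]
      rw [b2]
      have b3 := sq_sum_le_card_mul_sum_sq
        (s := (Finset.univ : Finset (Fin e)))
        (f := fun k => Real.sqrt (Af x a k) * Real.sqrt (Uf z c k))
      refine le_trans b3 ?_
      rw [Finset.card_univ, Fintype.card_fin]
      refine mul_le_mul_of_nonneg_left ?_ (by positivity)
      refine le_of_eq (Finset.sum_congr rfl fun k _ => ?_)
      rw [mul_pow, Real.sq_sqrt (hA0 x a k), Real.sq_sqrt (hU0 z c k)]
    calc ∑ x, ∑ z, ∑ a, ∑ c, H x z a c *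
          (∑ i : n × Fin e, ∑ j : n × Fin e,
            (starRingEnd ℂ) (φ i) * (K x a i.1 j.1 * Υ z c i.2 j.2) * φ j).re
        ≤ ∑ x, ∑ z, ∑ a, ∑ c, H x z a c * ((e : ℝ) * ∑ k, Af x a k * Uf z c k) := by
          refine Finset.sum_le_sum fun x _ => Finset.sum_le_sum fun z _ =>
            Finset.sum_le_sum fun a _ => Finset.sum_le_sum fun c _ => ?_
          exact mul_le_mul_of_nonneg_left (step x z a c) (hH x z a c)
      _ = (e : ℝ) * ∑ x, ∑ z, ∑ a, ∑ c, H x z a c *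
            ∑ k, p k * (if p k = 0 then (Fintype.card A₂ : ℝ)⁻¹
              else Af x a k / p k) * Uf z c k := by
          rw [Finset.mul_sum]
          refine Finset.sum_congr rfl fun x _ => ?_
          rw [Finset.mul_sum]
          refine Finset.sum_congr rfl fun z _ => ?_
          rw [Finset.mul_sum]
          refine Finset.sum_congr rfl fun a _ => ?_
          rw [Finset.mul_sum]
          refine Finset.sum_congr rfl fun c _ => ?_
          rw [Finset.sum_congr rfl fun k _ => hPQR x z a c k]
          ring

end Stmt15Aux

section Stmt15Glue

variable {X Y Z A B C : Type*} [Fintype X] [Fintype Y] [Fintype Z]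
  [Fintype A] [Fintype B] [Fintype C]

lemma JPbeh1_le_one {Q : X → A → ℝ} (h : IsBeh1 Q) (x : X) (a : A) : Q x a ≤ 1 := by
  have h1 : Q x a ≤ ∑ a', Q x a' :=
    Finset.single_le_sum (fun a' _ => h.1 x a') (Finset.mem_univ a)
  exact le_of_le_of_eq h1 (h.2 x)

lemma JPbeh2_le_one {Q : X → Y → A → B → ℝ} (h : IsBeh2 Q) (x : X) (y : Y) (a : A)
    (b : B) : Q x y a b ≤ 1 := by
  have h1 : Q x y a b ≤ ∑ b', Q x y a b' :=
    Finset.single_le_sum (fun b' _ => h.1 x y a b') (Finset.mem_univ b)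
  have h2 : ∑ b', Q x y a b' ≤ ∑ a', ∑ b', Q x y a' b' :=
    Finset.single_le_sum (f := fun a' => ∑ b', Q x y a' b')
      (fun a' _ => Finset.sum_nonneg fun b' _ => h.1 x y a' b') (Finset.mem_univ a)
  exact le_of_le_of_eq (h1.trans h2) (h.2 x y)

lemma JPbiloc_bounds {P : X → Y → Z → A → B → C → ℝ} (h : BilocTerm3 P)
    (x : X) (y : Y) (z : Z) (a : A) (b : B) (c : C) :
    0 ≤ P x y z a b c ∧ P x y z a b c ≤ 1 := by
  have key : ∀ (q r : ℝ), 0 ≤ q → q ≤ 1 → 0 ≤ r → r ≤ 1 → 0 ≤ q * r ∧ q * r ≤ 1 := by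
    intro q r hq0 hq1 hr0 hr1
    refine ⟨mul_nonneg hq0 hr0, ?_⟩
    have := mul_le_mul hq1 hr1 hr0 zero_le_one
    simpa using this
  rcases h with ⟨Q, R, hQ, hR, hE⟩ | ⟨Q, R, hQ, hR, hE⟩ | ⟨Q, R, hQ, hR, hE⟩ <;>
    rw [hE x y z a b c]
  · exact key _ _ (hQ.1 x y a b) (JPbeh2_le_one hQ x y a b) (hR.1 z c)
      (JPbeh1_le_one hR z c)
  · exact key _ _ (hQ.1 y z b c) (JPbeh2_le_one hQ y z b c) (hR.1 x a)
      (JPbeh1_le_one hR x a)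
  · exact key _ _ (hQ.1 x z a c) (JPbeh2_le_one hQ x z a c) (hR.1 y b)
      (JPbeh1_le_one hR y b)

lemma JPgen_bounds {P : X → Y → Z → A → B → C → ℝ} (h : IsGenBiloc3 P)
    (x : X) (y : Y) (z : Z) (a : A) (b : B) (c : C) :
    0 ≤ P x y z a b c ∧ P x y z a b c ≤ 1 := by
  obtain ⟨m, p, Ps, hp, hps, hterm, heq⟩ := h
  rw [heq x y z a b c]
  constructor
  · exact Finset.sum_nonneg fun j _ => mul_nonneg (hp j)
      (JPbiloc_bounds (hterm j) x y z a b c).1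
  · calc ∑ j, p j * Ps j x y z a b c ≤ ∑ j, p j * 1 :=
          Finset.sum_le_sum fun j _ => mul_le_mul_of_nonneg_left
            (JPbiloc_bounds (hterm j) x y z a b c).2 (hp j)
      _ = 1 := by simp [hps]

lemma JPbdd (G : X → Y → Z → A → B → C → ℝ) (hpos : ∀ x y z a b c, 0 ≤ G x y z a b c) :
    BddAbove {v | ∃ P, IsGenBiloc3 P ∧ v = val3 G P} := by
  refine ⟨∑ x, ∑ y, ∑ z, ∑ a, ∑ b, ∑ c, G x y z a b c, ?_⟩
  rintro v ⟨P, hPb, rfl⟩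
  unfold val3
  refine Finset.sum_le_sum fun x _ => Finset.sum_le_sum fun y _ =>
    Finset.sum_le_sum fun z _ => Finset.sum_le_sum fun a _ =>
    Finset.sum_le_sum fun b _ => Finset.sum_le_sum fun c _ => ?_
  exact mul_le_of_le_one_right (hpos x y z a b c) (JPgen_bounds hPb x y z a b c).2

lemma JPtail (G : X → Y → Z → A → B → C → ℝ)
    (hpos : ∀ x y z a b c, 0 ≤ G x y z a b c) {d e : ℕ} (he : e ≤ d)
    (P P' : X → Y → Z → A → B → C → ℝ) (h1 : IsGenBiloc3 P')
    (h2 : val3 G P ≤ (e : ℝ) * val3 G P') : val3 G P ≤ (d : ℝ) * bVal3 G := by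
  have h3 : val3 G P' ≤ bVal3 G := le_csSup (JPbdd G hpos) ⟨P', h1, rfl⟩
  have h0 : 0 ≤ val3 G P' := by
    unfold val3
    refine Finset.sum_nonneg fun x _ => Finset.sum_nonneg fun y _ =>
      Finset.sum_nonneg fun z _ => Finset.sum_nonneg fun a _ =>
      Finset.sum_nonneg fun b _ => Finset.sum_nonneg fun c _ => ?_
    exact mul_nonneg (hpos x y z a b c) (JPgen_bounds h1 x y z a b c).1
  have hb : 0 ≤ bVal3 G := h0.trans h3
  calc val3 G P ≤ (e : ℝ) * val3 G P' := h2
    _ ≤ (e : ℝ) * bVal3 G := mul_le_mul_of_nonneg_left h3 (Nat.cast_nonneg e)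
    _ ≤ (d : ℝ) * bVal3 G := mul_le_mul_of_nonneg_right (Nat.cast_le.mpr he) hb

end Stmt15Glue

/-- for a tripartite Bell functional `G` with nonnegative coefficients and a
tripartite quantum behaviour `P` in which at least one player's local Hilbert space has
dimension at most `d`, one has `⟨G, P⟩ ≤ d · ω_{BL³_G}(G)`; in particular
`ω_{Q³_d}(G) ≤ d · ω_{BL³_G}(G)`. -/
theorem unbounded_bell_stmt15 {X Y Z A B C : Type*} [Fintype X] [Fintype Y] [Fintype Z]
    [Fintype A] [Fintype B] [Fintype C]
    (G : X → Y → Z → A → B → C → ℝ)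
    (hpos : ∀ x y z a b c, 0 ≤ G x y z a b c)
    (d : ℕ) (P : X → Y → Z → A → B → C → ℝ)
    (d₁ d₂ d₃ : ℕ) (hdim : d₁ ≤ d ∨ d₂ ≤ d ∨ d₃ ≤ d)
    (hP : IsQBeh3Dim d₁ d₂ d₃ P) :
    val3 G P ≤ (d : ℝ) * bVal3 G := by
  classical
  by_cases hXYZ : Nonempty X ∧ Nonempty Y ∧ Nonempty Z
  case neg =>
    have hval : ∀ Q : X → Y → Z → A → B → C → ℝ, val3 G Q = 0 := by
      intro Q
      unfold val3
      rcases not_and_or.mp hXYZ with h | h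
      · haveI : IsEmpty X := not_nonempty_iff.mp h
        simp
      · rcases not_and_or.mp h with h' | h'
        · haveI : IsEmpty Y := not_nonempty_iff.mp h'
          simp
        · haveI : IsEmpty Z := not_nonempty_iff.mp h'
          simp
    have hsub : {v | ∃ P', IsGenBiloc3 P' ∧ v = val3 G P'} ⊆ {(0 : ℝ)} := by
      rintro v ⟨P', _, rfl⟩
      exact hval P'
    have hbv : bVal3 G = 0 := by
      unfold bVal3
      rcases Set.subset_singleton_iff_eq.mp hsub with h | h
      · rw [h]; exact Real.sSup_empty
      · rw [h]; exact csSup_singleton 0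
    rw [hval P, hbv, mul_zero]
  case pos =>
  obtain ⟨hX, hY, hZ⟩ := hXYZ
  obtain ⟨ψ, E, F, Υm, hψ, hE, hF, hΥ, hPeq⟩ := hP
  have hd1 : 0 < d₁ := by
    rcases Nat.eq_zero_or_pos d₁ with h | h
    · subst h; simp at hψ
    · exact h
  have hd2 : 0 < d₂ := by
    rcases Nat.eq_zero_or_pos d₂ with h | h
    · subst h; simp at hψ
    · exact h
  have hd3 : 0 < d₃ := by
    rcases Nat.eq_zero_or_pos d₃ with h | h
    · subst h; simp at hψ
    · exact h
  have hNA : Nonempty A := by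
    by_contra hcon
    haveI : IsEmpty A := not_nonempty_iff.mp hcon
    obtain ⟨x⟩ := hX
    have h1 := (hE x).2
    rw [Finset.univ_eq_empty, Finset.sum_empty] at h1
    have h2 := congrFun (congrFun h1 ⟨0, hd1⟩) ⟨0, hd1⟩
    simp at h2
  have hNB : Nonempty B := by
    by_contra hcon
    haveI : IsEmpty B := not_nonempty_iff.mp hcon
    obtain ⟨y⟩ := hY
    have h1 := (hF y).2
    rw [Finset.univ_eq_empty, Finset.sum_empty] at h1
    have h2 := congrFun (congrFun h1 ⟨0, hd2⟩) ⟨0, hd2⟩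
    simp at h2
  have hNC : Nonempty C := by
    by_contra hcon
    haveI : IsEmpty C := not_nonempty_iff.mp hcon
    obtain ⟨z⟩ := hZ
    have h1 := (hΥ z).2
    rw [Finset.univ_eq_empty, Finset.sum_empty] at h1
    have h2 := congrFun (congrFun h1 ⟨0, hd3⟩) ⟨0, hd3⟩
    simp at h2
  haveI := hNA
  haveI := hNB
  haveI := hNC
  rcases hdim with hdd | hdd | hdd
  · -- case d ≥ d₁
    haveI : Nonempty (B × C) := ⟨(Classical.arbitrary _, Classical.arbitrary _)⟩
    obtain ⟨p, Q, R, hp0, hps, hQ, hR, hineq⟩ :=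
      JPcore (n := Fin d₂ × Fin d₃) (e := d₁)
        (fun (yz : Y × Z) (x : X) (bc : B × C) (a : A) => G x yz.1 yz.2 a bc.1 bc.2)
        (fun yz x bc a => hpos x yz.1 yz.2 a bc.1 bc.2)
        (fun (yz : Y × Z) (bc : B × C) => (F yz.1 bc.1) ⊗ₖ (Υm yz.2 bc.2))
        (fun yz bc => JPpsd_kron ((hF yz.1).1 bc.1) ((hΥ yz.2).1 bc.2))
        (fun yz => JPkron_sum_one (fun b => F yz.1 b) (fun c => Υm yz.2 c) (hF yz.1).2 (hΥ yz.2).2)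
        E (fun x a => (hE x).1 a) (fun x => (hE x).2)
        (fun q => ψ (q.2, q.1.1, q.1.2))
        ((Fintype.sum_equiv
          ⟨fun (q : (Fin d₂ × Fin d₃) × Fin d₁) => (q.2, q.1.1, q.1.2),
           fun i => ((i.2.1, i.2.2), i.1), fun _ => rfl, fun _ => rfl⟩ _ _ (fun q => rfl)).trans hψ)
    have hPre : ∀ x y z a b c, P x y z a b c =
        (∑ i : (Fin d₂ × Fin d₃) × Fin d₁, ∑ j : (Fin d₂ × Fin d₃) × Fin d₁,
        (starRingEnd ℂ) (ψ (i.2, i.1.1, i.1.2)) *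
          ((F y b ⊗ₖ Υm z c) i.1 j.1 * E x a i.2 j.2) * ψ (j.2, j.1.1, j.1.2)).re := by
      intro x y z a b c
      have hsum : (∑ i : (Fin d₂ × Fin d₃) × Fin d₁, ∑ j : (Fin d₂ × Fin d₃) × Fin d₁,
          (starRingEnd ℂ) (ψ (i.2, i.1.1, i.1.2)) *
            ((F y b ⊗ₖ Υm z c) i.1 j.1 * E x a i.2 j.2) * ψ (j.2, j.1.1, j.1.2))
          = ∑ i : Fin d₁ × Fin d₂ × Fin d₃, ∑ j : Fin d₁ × Fin d₂ × Fin d₃,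
            (starRingEnd ℂ) (ψ i) * ((E x a ⊗ₖ (F y b ⊗ₖ Υm z c)) i j) * ψ j := by
        refine Fintype.sum_equiv
          ⟨fun (q : (Fin d₂ × Fin d₃) × Fin d₁) => (q.2, q.1.1, q.1.2),
           fun i => ((i.2.1, i.2.2), i.1), fun _ => rfl, fun _ => rfl⟩ _ _ (fun i => ?_)
        refine Fintype.sum_equiv
          ⟨fun (q : (Fin d₂ × Fin d₃) × Fin d₁) => (q.2, q.1.1, q.1.2),
           fun i => ((i.2.1, i.2.2), i.1), fun _ => rfl, fun _ => rfl⟩ _ _ (fun j => ?_)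
        simp [Matrix.kroneckerMap_apply, Equiv.coe_fn_mk, mul_comm, mul_assoc,
          mul_left_comm]
      rw [hsum, ← hPeq x y z a b c, Complex.ofReal_re]
    have stepA : val3 G P = ∑ x, ∑ y, ∑ z, ∑ a, ∑ b, ∑ c, G x y z a b c *
        (∑ i : (Fin d₂ × Fin d₃) × Fin d₁, ∑ j : (Fin d₂ × Fin d₃) × Fin d₁,
        (starRingEnd ℂ) (ψ (i.2, i.1.1, i.1.2)) *
          ((F y b ⊗ₖ Υm z c) i.1 j.1 * E x a i.2 j.2) * ψ (j.2, j.1.1, j.1.2)).re := by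
      unfold val3
      refine Finset.sum_congr rfl fun x _ => Finset.sum_congr rfl fun y _ =>
        Finset.sum_congr rfl fun z _ => Finset.sum_congr rfl fun a _ =>
        Finset.sum_congr rfl fun b _ => Finset.sum_congr rfl fun c _ => ?_
      rw [hPre x y z a b c]
    have stepC : (∑ yz : Y × Z, ∑ x, ∑ bc : B × C, ∑ a,
        G x yz.1 yz.2 a bc.1 bc.2 *
        (∑ i : (Fin d₂ × Fin d₃) × Fin d₁, ∑ j : (Fin d₂ × Fin d₃) × Fin d₁,
        (starRingEnd ℂ) (ψ (i.2, i.1.1, i.1.2)) *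
          ((F yz.1 bc.1 ⊗ₖ Υm yz.2 bc.2) i.1 j.1 * E x a i.2 j.2) * ψ (j.2, j.1.1, j.1.2)).re)
        = ∑ y, ∑ z, ∑ x, ∑ b, ∑ c, ∑ a, G x y z a b c *
          (∑ i : (Fin d₂ × Fin d₃) × Fin d₁, ∑ j : (Fin d₂ × Fin d₃) × Fin d₁,
        (starRingEnd ℂ) (ψ (i.2, i.1.1, i.1.2)) *
          ((F y b ⊗ₖ Υm z c) i.1 j.1 * E x a i.2 j.2) * ψ (j.2, j.1.1, j.1.2)).re := by
      rw [Fintype.sum_prod_type]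
      refine Finset.sum_congr rfl fun y _ => Finset.sum_congr rfl fun z _ =>
        Finset.sum_congr rfl fun x _ => ?_
      rw [Fintype.sum_prod_type]
    have stepC' : (∑ yz : Y × Z, ∑ x, ∑ bc : B × C, ∑ a,
        G x yz.1 yz.2 a bc.1 bc.2 * (∑ k, p k * Q k yz bc * R k x a))
        = ∑ y, ∑ z, ∑ x, ∑ b, ∑ c, ∑ a, G x y z a b c * (∑ k, p k * Q k (y, z) (b, c) * R k x a) := by
      rw [Fintype.sum_prod_type]
      refine Finset.sum_congr rfl fun y _ => Finset.sum_congr rfl fun z _ =>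
        Finset.sum_congr rfl fun x _ => ?_
      rw [Fintype.sum_prod_type]
    refine JPtail G hpos hdd P
      (fun x y z a b c => ∑ k, p k * Q k (y, z) (b, c) * R k x a) ?_ ?_
    · exact ⟨d₁, p, fun k x y z a b c => Q k (y, z) (b, c) * R k x a, hp0, hps,
        fun k => Or.inr (Or.inl ⟨fun y z b c => Q k (y, z) (b, c), R k,
        ⟨fun y z b c => (hQ k).1 (y, z) (b, c), fun y z => by
          have hh := (hQ k).2 (y, z)
          rwa [Fintype.sum_prod_type] at hh⟩,
        hR k, fun x y z a b c => rfl⟩),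
        fun x y z a b c => by simp [mul_assoc]⟩
    · refine le_trans (le_of_eq ?_) (le_trans hineq (le_of_eq ?_))
      · exact stepA.trans ((JPreorder_yzxbca _).symm.trans stepC.symm)
      · refine congrArg (fun t => ((d₁ : ℕ) : ℝ) * t) ?_
        rw [stepC', JPreorder_yzxbca (fun x y z a b c => G x y z a b c * (∑ k, p k * Q k (y, z) (b, c) * R k x a))]
        rfl
  · -- case d ≥ d₂
    haveI : Nonempty (A × C) := ⟨(Classical.arbitrary _, Classical.arbitrary _)⟩
    obtain ⟨p, Q, R, hp0, hps, hQ, hR, hineq⟩ :=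
      JPcore (n := Fin d₁ × Fin d₃) (e := d₂)
        (fun (xz : X × Z) (y : Y) (ac : A × C) (b : B) => G xz.1 y xz.2 ac.1 b ac.2)
        (fun xz y ac b => hpos xz.1 y xz.2 ac.1 b ac.2)
        (fun (xz : X × Z) (ac : A × C) => (E xz.1 ac.1) ⊗ₖ (Υm xz.2 ac.2))
        (fun xz ac => JPpsd_kron ((hE xz.1).1 ac.1) ((hΥ xz.2).1 ac.2))
        (fun xz => JPkron_sum_one (fun a => E xz.1 a) (fun c => Υm xz.2 c) (hE xz.1).2 (hΥ xz.2).2)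
        F (fun y b => (hF y).1 b) (fun y => (hF y).2)
        (fun q => ψ (q.1.1, q.2, q.1.2))
        ((Fintype.sum_equiv
          ⟨fun (q : (Fin d₁ × Fin d₃) × Fin d₂) => (q.1.1, q.2, q.1.2),
           fun i => ((i.1, i.2.2), i.2.1), fun _ => rfl, fun _ => rfl⟩ _ _ (fun q => rfl)).trans hψ)
    have hPre : ∀ x y z a b c, P x y z a b c =
        (∑ i : (Fin d₁ × Fin d₃) × Fin d₂, ∑ j : (Fin d₁ × Fin d₃) × Fin d₂,
        (starRingEnd ℂ) (ψ (i.1.1, i.2, i.1.2)) *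
          ((E x a ⊗ₖ Υm z c) i.1 j.1 * F y b i.2 j.2) * ψ (j.1.1, j.2, j.1.2)).re := by
      intro x y z a b c
      have hsum : (∑ i : (Fin d₁ × Fin d₃) × Fin d₂, ∑ j : (Fin d₁ × Fin d₃) × Fin d₂,
          (starRingEnd ℂ) (ψ (i.1.1, i.2, i.1.2)) *
            ((E x a ⊗ₖ Υm z c) i.1 j.1 * F y b i.2 j.2) * ψ (j.1.1, j.2, j.1.2))
          = ∑ i : Fin d₁ × Fin d₂ × Fin d₃, ∑ j : Fin d₁ × Fin d₂ × Fin d₃,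
            (starRingEnd ℂ) (ψ i) * ((E x a ⊗ₖ (F y b ⊗ₖ Υm z c)) i j) * ψ j := by
        refine Fintype.sum_equiv
          ⟨fun (q : (Fin d₁ × Fin d₃) × Fin d₂) => (q.1.1, q.2, q.1.2),
           fun i => ((i.1, i.2.2), i.2.1), fun _ => rfl, fun _ => rfl⟩ _ _ (fun i => ?_)
        refine Fintype.sum_equiv
          ⟨fun (q : (Fin d₁ × Fin d₃) × Fin d₂) => (q.1.1, q.2, q.1.2),
           fun i => ((i.1, i.2.2), i.2.1), fun _ => rfl, fun _ => rfl⟩ _ _ (fun j => ?_)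
        simp [Matrix.kroneckerMap_apply, Equiv.coe_fn_mk, mul_comm, mul_assoc,
          mul_left_comm]
      rw [hsum, ← hPeq x y z a b c, Complex.ofReal_re]
    have stepA : val3 G P = ∑ x, ∑ y, ∑ z, ∑ a, ∑ b, ∑ c, G x y z a b c *
        (∑ i : (Fin d₁ × Fin d₃) × Fin d₂, ∑ j : (Fin d₁ × Fin d₃) × Fin d₂,
        (starRingEnd ℂ) (ψ (i.1.1, i.2, i.1.2)) *
          ((E x a ⊗ₖ Υm z c) i.1 j.1 * F y b i.2 j.2) * ψ (j.1.1, j.2, j.1.2)).re := by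
      unfold val3
      refine Finset.sum_congr rfl fun x _ => Finset.sum_congr rfl fun y _ =>
        Finset.sum_congr rfl fun z _ => Finset.sum_congr rfl fun a _ =>
        Finset.sum_congr rfl fun b _ => Finset.sum_congr rfl fun c _ => ?_
      rw [hPre x y z a b c]
    have stepC : (∑ xz : X × Z, ∑ y, ∑ ac : A × C, ∑ b,
        G xz.1 y xz.2 ac.1 b ac.2 *
        (∑ i : (Fin d₁ × Fin d₃) × Fin d₂, ∑ j : (Fin d₁ × Fin d₃) × Fin d₂,
        (starRingEnd ℂ) (ψ (i.1.1, i.2, i.1.2)) *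
          ((E xz.1 ac.1 ⊗ₖ Υm xz.2 ac.2) i.1 j.1 * F y b i.2 j.2) * ψ (j.1.1, j.2, j.1.2)).re)
        = ∑ x, ∑ z, ∑ y, ∑ a, ∑ c, ∑ b, G x y z a b c *
          (∑ i : (Fin d₁ × Fin d₃) × Fin d₂, ∑ j : (Fin d₁ × Fin d₃) × Fin d₂,
        (starRingEnd ℂ) (ψ (i.1.1, i.2, i.1.2)) *
          ((E x a ⊗ₖ Υm z c) i.1 j.1 * F y b i.2 j.2) * ψ (j.1.1, j.2, j.1.2)).re := by
      rw [Fintype.sum_prod_type]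
      refine Finset.sum_congr rfl fun x _ => Finset.sum_congr rfl fun z _ =>
        Finset.sum_congr rfl fun y _ => ?_
      rw [Fintype.sum_prod_type]
    have stepC' : (∑ xz : X × Z, ∑ y, ∑ ac : A × C, ∑ b,
        G xz.1 y xz.2 ac.1 b ac.2 * (∑ k, p k * Q k xz ac * R k y b))
        = ∑ x, ∑ z, ∑ y, ∑ a, ∑ c, ∑ b, G x y z a b c * (∑ k, p k * Q k (x, z) (a, c) * R k y b) := by
      rw [Fintype.sum_prod_type]
      refine Finset.sum_congr rfl fun x _ => Finset.sum_congr rfl fun z _ =>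
        Finset.sum_congr rfl fun y _ => ?_
      rw [Fintype.sum_prod_type]
    refine JPtail G hpos hdd P
      (fun x y z a b c => ∑ k, p k * Q k (x, z) (a, c) * R k y b) ?_ ?_
    · exact ⟨d₂, p, fun k x y z a b c => Q k (x, z) (a, c) * R k y b, hp0, hps,
        fun k => Or.inr (Or.inr ⟨fun x z a c => Q k (x, z) (a, c), R k,
        ⟨fun x z a c => (hQ k).1 (x, z) (a, c), fun x z => by
          have hh := (hQ k).2 (x, z)
          rwa [Fintype.sum_prod_type] at hh⟩,
        hR k, fun x y z a b c => rfl⟩),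
        fun x y z a b c => by simp [mul_assoc]⟩
    · refine le_trans (le_of_eq ?_) (le_trans hineq (le_of_eq ?_))
      · exact stepA.trans ((JPreorder_xzyacb _).symm.trans stepC.symm)
      · refine congrArg (fun t => ((d₂ : ℕ) : ℝ) * t) ?_
        rw [stepC', JPreorder_xzyacb (fun x y z a b c => G x y z a b c * (∑ k, p k * Q k (x, z) (a, c) * R k y b))]
        rfl
  · -- case d ≥ d₃
    haveI : Nonempty (A × B) := ⟨(Classical.arbitrary _, Classical.arbitrary _)⟩
    obtain ⟨p, Q, R, hp0, hps, hQ, hR, hineq⟩ :=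
      JPcore (n := Fin d₁ × Fin d₂) (e := d₃)
        (fun (xy : X × Y) (z : Z) (ab : A × B) (c : C) => G xy.1 xy.2 z ab.1 ab.2 c)
        (fun xy z ab c => hpos xy.1 xy.2 z ab.1 ab.2 c)
        (fun (xy : X × Y) (ab : A × B) => (E xy.1 ab.1) ⊗ₖ (F xy.2 ab.2))
        (fun xy ab => JPpsd_kron ((hE xy.1).1 ab.1) ((hF xy.2).1 ab.2))
        (fun xy => JPkron_sum_one (fun a => E xy.1 a) (fun b => F xy.2 b) (hE xy.1).2 (hF xy.2).2)
        Υm (fun z c => (hΥ z).1 c) (fun z => (hΥ z).2)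
        (fun q => ψ (q.1.1, q.1.2, q.2))
        ((Fintype.sum_equiv
          ⟨fun (q : (Fin d₁ × Fin d₂) × Fin d₃) => (q.1.1, q.1.2, q.2),
           fun i => ((i.1, i.2.1), i.2.2), fun _ => rfl, fun _ => rfl⟩ _ _ (fun q => rfl)).trans hψ)
    have hPre : ∀ x y z a b c, P x y z a b c =
        (∑ i : (Fin d₁ × Fin d₂) × Fin d₃, ∑ j : (Fin d₁ × Fin d₂) × Fin d₃,
        (starRingEnd ℂ) (ψ (i.1.1, i.1.2, i.2)) *
          ((E x a ⊗ₖ F y b) i.1 j.1 * Υm z c i.2 j.2) * ψ (j.1.1, j.1.2, j.2)).re := by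
      intro x y z a b c
      have hsum : (∑ i : (Fin d₁ × Fin d₂) × Fin d₃, ∑ j : (Fin d₁ × Fin d₂) × Fin d₃,
          (starRingEnd ℂ) (ψ (i.1.1, i.1.2, i.2)) *
            ((E x a ⊗ₖ F y b) i.1 j.1 * Υm z c i.2 j.2) * ψ (j.1.1, j.1.2, j.2))
          = ∑ i : Fin d₁ × Fin d₂ × Fin d₃, ∑ j : Fin d₁ × Fin d₂ × Fin d₃,
            (starRingEnd ℂ) (ψ i) * ((E x a ⊗ₖ (F y b ⊗ₖ Υm z c)) i j) * ψ j := by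
        refine Fintype.sum_equiv
          ⟨fun (q : (Fin d₁ × Fin d₂) × Fin d₃) => (q.1.1, q.1.2, q.2),
           fun i => ((i.1, i.2.1), i.2.2), fun _ => rfl, fun _ => rfl⟩ _ _ (fun i => ?_)
        refine Fintype.sum_equiv
          ⟨fun (q : (Fin d₁ × Fin d₂) × Fin d₃) => (q.1.1, q.1.2, q.2),
           fun i => ((i.1, i.2.1), i.2.2), fun _ => rfl, fun _ => rfl⟩ _ _ (fun j => ?_)
        simp [Matrix.kroneckerMap_apply, Equiv.coe_fn_mk, mul_comm, mul_assoc,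
          mul_left_comm]
      rw [hsum, ← hPeq x y z a b c, Complex.ofReal_re]
    have stepA : val3 G P = ∑ x, ∑ y, ∑ z, ∑ a, ∑ b, ∑ c, G x y z a b c *
        (∑ i : (Fin d₁ × Fin d₂) × Fin d₃, ∑ j : (Fin d₁ × Fin d₂) × Fin d₃,
        (starRingEnd ℂ) (ψ (i.1.1, i.1.2, i.2)) *
          ((E x a ⊗ₖ F y b) i.1 j.1 * Υm z c i.2 j.2) * ψ (j.1.1, j.1.2, j.2)).re := by
      unfold val3
      refine Finset.sum_congr rfl fun x _ => Finset.sum_congr rfl fun y _ =>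
        Finset.sum_congr rfl fun z _ => Finset.sum_congr rfl fun a _ =>
        Finset.sum_congr rfl fun b _ => Finset.sum_congr rfl fun c _ => ?_
      rw [hPre x y z a b c]
    have stepC : (∑ xy : X × Y, ∑ z, ∑ ab : A × B, ∑ c,
        G xy.1 xy.2 z ab.1 ab.2 c *
        (∑ i : (Fin d₁ × Fin d₂) × Fin d₃, ∑ j : (Fin d₁ × Fin d₂) × Fin d₃,
        (starRingEnd ℂ) (ψ (i.1.1, i.1.2, i.2)) *
          ((E xy.1 ab.1 ⊗ₖ F xy.2 ab.2) i.1 j.1 * Υm z c i.2 j.2) * ψ (j.1.1, j.1.2, j.2)).re)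
        = ∑ x, ∑ y, ∑ z, ∑ a, ∑ b, ∑ c, G x y z a b c *
          (∑ i : (Fin d₁ × Fin d₂) × Fin d₃, ∑ j : (Fin d₁ × Fin d₂) × Fin d₃,
        (starRingEnd ℂ) (ψ (i.1.1, i.1.2, i.2)) *
          ((E x a ⊗ₖ F y b) i.1 j.1 * Υm z c i.2 j.2) * ψ (j.1.1, j.1.2, j.2)).re := by
      rw [Fintype.sum_prod_type]
      refine Finset.sum_congr rfl fun x _ => Finset.sum_congr rfl fun y _ =>
        Finset.sum_congr rfl fun z _ => ?_
      rw [Fintype.sum_prod_type]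
    have stepC' : (∑ xy : X × Y, ∑ z, ∑ ab : A × B, ∑ c,
        G xy.1 xy.2 z ab.1 ab.2 c * (∑ k, p k * Q k xy ab * R k z c))
        = ∑ x, ∑ y, ∑ z, ∑ a, ∑ b, ∑ c, G x y z a b c * (∑ k, p k * Q k (x, y) (a, b) * R k z c) := by
      rw [Fintype.sum_prod_type]
      refine Finset.sum_congr rfl fun x _ => Finset.sum_congr rfl fun y _ =>
        Finset.sum_congr rfl fun z _ => ?_
      rw [Fintype.sum_prod_type]
    refine JPtail G hpos hdd P
      (fun x y z a b c => ∑ k, p k * Q k (x, y) (a, b) * R k z c) ?_ ?_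
    · exact ⟨d₃, p, fun k x y z a b c => Q k (x, y) (a, b) * R k z c, hp0, hps,
        fun k => Or.inl ⟨fun x y a b => Q k (x, y) (a, b), R k,
        ⟨fun x y a b => (hQ k).1 (x, y) (a, b), fun x y => by
          have hh := (hQ k).2 (x, y)
          rwa [Fintype.sum_prod_type] at hh⟩,
        hR k, fun x y z a b c => rfl⟩,
        fun x y z a b c => by simp [mul_assoc]⟩
    · refine le_trans (le_of_eq ?_) (le_trans hineq (le_of_eq ?_))
      · exact stepA.trans (stepC.symm)
      · refine congrArg (fun t => ((d₃ : ℕ) : ℝ) * t) ?_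
        rw [stepC']
        rfl

end BellGames
end
end
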